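/- For the geodesic equations on the multivariate normal manifold with initial point (μ, Σ) = (0, I) and initial velocity (x, B), the curves satisfying dμ/dt = Σx and dΣ/dt = Σ(B − xμᵀ) satisfy the second-order geodesic equations d²μ/dt² = (dΣ/dt)Σ⁻¹(dμ/dt) and d²Σ/dt² = (dΣ/dt)Σ⁻¹(dΣ/dt) − (dμ/dt)(dμ/dt)ᵀ. -/

import Mathlib

open Matrix

attribute [local instance] Matrix.normedAddCommGroup Matrix.normedSpace

section Aux

variable {d : ℕ}

/-- Left multiplication, curried as a continuous bilinear map. -/
noncomputable def mulCLM :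
    Matrix (Fin d) (Fin d) ℝ →L[ℝ]
      Matrix (Fin d) (Fin d) ℝ →L[ℝ] Matrix (Fin d) (Fin d) ℝ :=
  LinearMap.toContinuousLinearMap
    { toFun := fun A => LinearMap.toContinuousLinearMap
        { toFun := fun C => A * C
          map_add' := fun C D => mul_add A C D
          map_smul' := fun c C => mul_smul_comm c A C }
      map_add' := fun A B => by ext C i j; simp [add_mul]
      map_smul' := fun c A => by ext C i j; simp [smul_mul_assoc] }

noncomputable instance instNormedAddCommGroupMatCLM :
    NormedAddCommGroup (Matrix (Fin d) (Fin d) ℝ →L[ℝ] Matrix (Fin d) (Fin d) ℝ) :=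
  ContinuousLinearMap.toNormedAddCommGroup

noncomputable instance instNormedSpaceMatCLM :
    NormedSpace ℝ (Matrix (Fin d) (Fin d) ℝ →L[ℝ] Matrix (Fin d) (Fin d) ℝ) :=
  ContinuousLinearMap.toNormedSpace

@[simp] lemma mulCLM_apply (A C : Matrix (Fin d) (Fin d) ℝ) :
    mulCLM A C = A * C := rfl

/-- `A ↦ A.mulVec x` as a continuous linear map. -/
noncomputable def mulVecCLM (x : Fin d → ℝ) :
    Matrix (Fin d) (Fin d) ℝ →L[ℝ] (Fin d → ℝ) :=
  LinearMap.toContinuousLinearMap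
    { toFun := fun A => A.mulVec x
      map_add' := fun A B => Matrix.add_mulVec A B x
      map_smul' := fun c A => Matrix.smul_mulVec c A x }

/-- `v ↦ vecMulVec x v` as a continuous linear map. -/
noncomputable def vecMulVecCLM (x : Fin d → ℝ) :
    (Fin d → ℝ) →L[ℝ] Matrix (Fin d) (Fin d) ℝ :=
  LinearMap.toContinuousLinearMap
    { toFun := fun v => vecMulVec x v
      map_add' := fun v w => by ext i j; simp [vecMulVec, mul_add]
      map_smul' := fun c v => by ext i j; simp [vecMulVec]; ring }

lemma mul_vecMulVec (A : Matrix (Fin d) (Fin d) ℝ) (x v : Fin d → ℝ) :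
    A * vecMulVec x v = vecMulVec (A.mulVec x) v := by
  ext i j
  simp [Matrix.mul_apply, vecMulVec_apply, Matrix.mulVec, dotProduct, Finset.sum_mul,
    mul_assoc]

end Aux

/-- Curves `(μ(t), Σ(t))` starting at the origin `(0, I)` with initial velocity `(x, B)` that
satisfy the first-order equations `dμ/dt = Σx` and `dΣ/dt = Σ(B − xμᵀ)` satisfy the
second-order geodesic equations `d²μ/dt² = (dΣ/dt)Σ⁻¹(dμ/dt)` and
`d²Σ/dt² = (dΣ/dt)Σ⁻¹(dΣ/dt) − (dμ/dt)(dμ/dt)ᵀ`. -/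
theorem first_order_geodesic_satisfies_second_order {d : ℕ}
    (μ : ℝ → (Fin d → ℝ)) (S : ℝ → Matrix (Fin d) (Fin d) ℝ)
    (x : Fin d → ℝ) (B : Matrix (Fin d) (Fin d) ℝ) (hB : B.IsSymm)
    (hpos : ∀ t, (S t).PosDef)
    (hμ0 : μ 0 = 0) (hS0 : S 0 = 1)
    (hx : x = (S 0).mulVec x) (hBv : B = S 0 * (B - vecMulVec x (μ 0)))
    (hμ : ∀ t, HasDerivAt μ ((S t).mulVec x) t)
    (hS : ∀ t, HasDerivAt S (S t * (B - vecMulVec x (μ t))) t) :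
    (∀ t, HasDerivAt (fun s => (S s).mulVec x)
        (((S t * (B - vecMulVec x (μ t))) * (S t)⁻¹).mulVec ((S t).mulVec x)) t) ∧
    (∀ t, HasDerivAt (fun s => S s * (B - vecMulVec x (μ s)))
        ((S t * (B - vecMulVec x (μ t))) * (S t)⁻¹ * (S t * (B - vecMulVec x (μ t))) -
          vecMulVec ((S t).mulVec x) ((S t).mulVec x)) t) := by
  have hinv : ∀ t, (S t)⁻¹ * S t = 1 := fun t =>
    Matrix.nonsing_inv_mul _ (isUnit_iff_ne_zero.mpr (hpos t).det_pos.ne')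
  constructor
  · intro t
    have h1 : HasDerivAt (fun s => (S s).mulVec x)
        ((S t * (B - vecMulVec x (μ t))).mulVec x) t :=
      (mulVecCLM x).hasFDerivAt.comp_hasDerivAt t (hS t)
    convert h1 using 1
    simp only [Matrix.mulVec_mulVec]
    rw [mul_assoc, hinv t, mul_one]
  · intro t
    have hc : HasDerivAt (fun s => mulCLM (S s))
        (mulCLM (S t * (B - vecMulVec x (μ t)))) t :=
      (mulCLM (d := d)).hasFDerivAt.comp_hasDerivAt t (hS t)
    have hu : HasDerivAt (fun s => B - vecMulVec x (μ s))
        (-(vecMulVec x ((S t).mulVec x))) t := by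
      have := ((vecMulVecCLM x).hasFDerivAt.comp_hasDerivAt t (hμ t)).const_sub B
      exact this
    have h2 := hc.clm_apply hu
    change HasDerivAt (fun s => S s * (B - vecMulVec x (μ s)))
      (S t * (B - vecMulVec x (μ t)) * (B - vecMulVec x (μ t)) +
        S t * -(vecMulVec x ((S t).mulVec x))) t at h2
    convert h2 using 1
    rw [mul_neg, mul_vecMulVec]
    have hassoc : S t * (B - vecMulVec x (μ t)) * (S t)⁻¹ * (S t * (B - vecMulVec x (μ t)))
        = S t * (B - vecMulVec x (μ t)) * (B - vecMulVec x (μ t)) := by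
      rw [mul_assoc, ← mul_assoc ((S t)⁻¹), hinv t, one_mul]
    rw [hassoc]
    abel
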